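/- A pure quaternion q belongs to the quaternionic Mandelbrot set if and only if ‖q‖·i belongs to the classical Mandelbrot set. Consequently, setting R = max{x ≥ 0 : xi ∈ M} (which exists since M is closed), the 3D slice H(i,j,k) of the quaternionic Mandelbrot set is contained in the closed ball of radius R centered at 0. -/

import Mathlib

/-!
A pure quaternion `q ≠ 0` lies on a copy of `ℂ` inside `ℍ`:
`u = q / ‖q‖` is a pure unit, so `u² = -1` and `a + b i ↦ a + b u` is an isometric
`ℝ`-algebra embedding `ℂ → ℍ` sending `‖q‖ i` to `q`. Algebra maps commute with
`z ↦ z² + c`, so the quaternionic orbit of `q` is the image of the complex orbit of `‖q‖ i`,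
with the same norms. For the ball: `|c| > 2` makes the orbit of `c` escape, so the admissible
radii `x` with `x i ∈ M` are bounded by `2` and `‖q‖` is one of them.
-/

open scoped Quaternion
open Bornology

def quadraticOrbit {A : Type*} [Semiring A] (c : A) (n : ℕ) : A :=
  (fun z => z ^ 2 + c)^[n] 0

theorem quadraticOrbit_succ {A : Type*} [Semiring A] (c : A) (n : ℕ) :
    quadraticOrbit c (n + 1) = quadraticOrbit c n ^ 2 + c :=
  Function.iterate_succ_apply' _ n 0

theorem quadraticOrbit_zero_left {A : Type*} [Semiring A] (n : ℕ) :
    quadraticOrbit (0 : A) n = 0 :=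
  Function.iterate_fixed (by simp) n

theorem map_quadraticOrbit {F A B : Type*} [Semiring A] [Semiring B] [FunLike F A B]
    [RingHomClass F A B] (f : F) (c : A) (n : ℕ) :
    f (quadraticOrbit c n) = quadraticOrbit (f c) n := by
  have hsemi : Function.Semiconj f (fun z => z ^ 2 + c) (fun z => z ^ 2 + f c) :=
    fun z => by simp only [map_add, map_pow]
  simpa [quadraticOrbit] using hsemi.iterate_right n 0

theorem isBounded_range_iff_of_norm_eq {ι E F : Type*} [SeminormedAddGroup E]
    [SeminormedAddGroup F] {f : ι → E} {g : ι → F} (h : ∀ i, ‖f i‖ = ‖g i‖) :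
    IsBounded (Set.range f) ↔ IsBounded (Set.range g) := by
  simp only [isBounded_iff_forall_norm_le, Set.forall_mem_range, h]

section Escape

variable {𝕜 : Type*} [NormedDivisionRing 𝕜] {c : 𝕜}

theorem norm_mul_sub_one_le_norm_sq_add {w : 𝕜} (hcw : ‖c‖ ≤ ‖w‖) :
    ‖w‖ * (‖c‖ - 1) ≤ ‖w ^ 2 + c‖ :=
  calc ‖w‖ * (‖c‖ - 1) ≤ ‖w‖ * (‖w‖ - 1) := by gcongr
    _ ≤ ‖w ^ 2‖ - ‖c‖ := by rw [norm_pow]; nlinarith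
    _ ≤ ‖w ^ 2 + c‖ := norm_sub_le_norm_add _ _

theorem norm_mul_pow_le_norm_quadraticOrbit (hc : 2 < ‖c‖) (n : ℕ) :
    ‖c‖ * (‖c‖ - 1) ^ n ≤ ‖quadraticOrbit c (n + 1)‖ := by
  induction n with
  | zero => simp [quadraticOrbit]
  | succ n ih =>
    have hcw : ‖c‖ ≤ ‖quadraticOrbit c (n + 1)‖ :=
      (le_mul_of_one_le_right (by linarith) (one_le_pow₀ (by linarith))).trans ih
    calc ‖c‖ * (‖c‖ - 1) ^ (n + 1) = ‖c‖ * (‖c‖ - 1) ^ n * (‖c‖ - 1) := by ring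
      _ ≤ ‖quadraticOrbit c (n + 1)‖ * (‖c‖ - 1) := by gcongr; linarith
      _ ≤ ‖quadraticOrbit c (n + 2)‖ := by
        rw [quadraticOrbit_succ c (n + 1)]
        exact norm_mul_sub_one_le_norm_sq_add hcw

theorem not_isBounded_range_quadraticOrbit (hc : 2 < ‖c‖) :
    ¬IsBounded (Set.range (quadraticOrbit c)) := by
  intro hbdd
  obtain ⟨C, hC⟩ := isBounded_iff_forall_norm_le.mp hbdd
  obtain ⟨n, hn⟩ := pow_unbounded_of_one_lt C (by linarith : (1 : ℝ) < ‖c‖ - 1)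
  have hle := (le_mul_of_one_le_left (pow_nonneg (by linarith) n) (by linarith)).trans
    (norm_mul_pow_le_norm_quadraticOrbit hc n)
  linarith [hC _ (Set.mem_range_self (n + 1))]

end Escape

namespace Quaternion

theorem mul_self_eq_neg_one_of_re_eq_zero {u : ℍ[ℝ]} (hre : u.re = 0) (hu : ‖u‖ = 1) :
    u * u = -1 := by
  rw [← sq, sq_eq_neg_normSq.mpr hre, normSq_eq_norm_mul_self, hu, mul_one, coe_one]

theorem norm_liftAux {u : ℍ[ℝ]} (hre : u.re = 0) (hu : ‖u‖ = 1) (z : ℂ) :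
    ‖Complex.liftAux u (mul_self_eq_neg_one_of_re_eq_zero hre hu) z‖ = ‖z‖ := by
  have hnormSq : normSq (Complex.liftAux u (mul_self_eq_neg_one_of_re_eq_zero hre hu) z) =
      Complex.normSq z := by
    rw [Complex.liftAux_apply, normSq_add, normSq_smul, normSq_eq_norm_mul_self u, hu,
      Complex.normSq_apply]
    simp [hre, normSq_coe, sq]
  rw [← sq_eq_sq₀ (norm_nonneg _) (norm_nonneg _), sq, sq, ← normSq_eq_norm_mul_self,
    hnormSq, Complex.normSq_eq_norm_sq, sq]

theorem norm_quadraticOrbit_eq_of_re_eq_zero {q : ℍ[ℝ]} (hq : q.re = 0) (n : ℕ) :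
    ‖quadraticOrbit q n‖ = ‖quadraticOrbit ((‖q‖ : ℂ) * Complex.I) n‖ := by
  rcases eq_or_ne q 0 with rfl | hq0
  · simp [quadraticOrbit_zero_left]
  set u : ℍ[ℝ] := ‖q‖⁻¹ • q
  have hpos : 0 < ‖q‖ := norm_pos_iff.mpr hq0
  have hure : u.re = 0 := by simp [u, hq]
  have hunorm : ‖u‖ = 1 := by simp [u, norm_smul, hpos.ne']
  have hmap : Complex.liftAux u (mul_self_eq_neg_one_of_re_eq_zero hure hunorm)
      ((‖q‖ : ℂ) * Complex.I) = q := by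
    simp [Complex.liftAux_apply, u, smul_smul, hpos.ne']
  rw [← norm_liftAux hure hunorm, map_quadraticOrbit, hmap]

theorem isBounded_range_quadraticOrbit_iff_of_re_eq_zero {q : ℍ[ℝ]} (hq : q.re = 0) :
    IsBounded (Set.range (quadraticOrbit q)) ↔
      IsBounded (Set.range (quadraticOrbit ((‖q‖ : ℂ) * Complex.I))) :=
  isBounded_range_iff_of_norm_eq (norm_quadraticOrbit_eq_of_re_eq_zero hq)

end Quaternion

/-- A pure quaternion q is in the quaternionic Mandelbrot set iff ‖q‖·i is in
the classical Mandelbrot set; hence the slice H(i,j,k) is contained in the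
closed ball of radius R = max{x ≥ 0 : xi ∈ M} centered at 0. -/
theorem metasphere_in_closed_ball :
    (∀ q : ℍ[ℝ], q.re = 0 →
      (Bornology.IsBounded
          (Set.range fun n : ℕ => (fun z : ℍ[ℝ] => z ^ 2 + q)^[n] 0) ↔
        Bornology.IsBounded
          (Set.range fun n : ℕ =>
            (fun z : ℂ => z ^ 2 + (‖q‖ : ℂ) * Complex.I)^[n] 0))) ∧
    (∀ q : ℍ[ℝ], q.re = 0 →
      Bornology.IsBounded
          (Set.range fun n : ℕ => (fun z : ℍ[ℝ] => z ^ 2 + q)^[n] 0) →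
        q ∈ Metric.closedBall (0 : ℍ[ℝ])
          (sSup {x : ℝ | 0 ≤ x ∧ Bornology.IsBounded
            (Set.range fun n : ℕ =>
              (fun z : ℂ => z ^ 2 + (x : ℂ) * Complex.I)^[n] 0)})) := by
  refine ⟨fun q hq => Quaternion.isBounded_range_quadraticOrbit_iff_of_re_eq_zero hq,
    fun q hq hbdd => ?_⟩
  have hradii : BddAbove {x : ℝ | 0 ≤ x ∧ IsBounded (Set.range (quadraticOrbit
      ((x : ℂ) * Complex.I)))} := by
    refine ⟨2, fun x ⟨hx0, hx⟩ => not_lt.mp fun h2 => ?_⟩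
    refine not_isBounded_range_quadraticOrbit ?_ hx
    simpa [abs_of_nonneg hx0] using h2
  rw [Metric.mem_closedBall, dist_zero_right]
  exact le_csSup hradii
    ⟨norm_nonneg q, (Quaternion.isBounded_range_quadraticOrbit_iff_of_re_eq_zero hq).mp hbdd⟩
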